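/- Let p be an odd prime. Then -U_p = Q^{-2p} A Q^{-2} A^p, where A = [[1,0],[1,1]], Q = [[1,(p+1)/(2p)],[0,1]], U_p = [[p,0],[0,1/p]]. In particular U_p^2 lies in the subgroup generated by A and Q. -/

import Mathlib

abbrev SL2Q := Matrix.SpecialLinearGroup (Fin 2) ℚ

/-- A = [[1,0],[1,1]] -/
def matA : SL2Q := ⟨!![1,0;1,1], by norm_num [Matrix.det_fin_two_of]⟩
/-- B = [[0,1],[-1,0]] -/
def matB : SL2Q := ⟨!![0,1;-1,0], by norm_num [Matrix.det_fin_two_of]⟩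
/-- Q_q = [[1,q],[0,1]] -/
def matQ (q : ℚ) : SL2Q := ⟨!![1,q;0,1], by norm_num [Matrix.det_fin_two_of]⟩
/-- U_p = [[p,0],[0,1/p]] -/
def matU (p : ℚ) (hp : p ≠ 0) : SL2Q := ⟨!![p,0;0,p⁻¹], by rw [Matrix.det_fin_two_of]; field_simp; norm_num⟩
/-- lower unipotent [[1,0],[x,1]] -/
def matL (x : ℚ) : SL2Q := ⟨!![1,0;x,1], by norm_num [Matrix.det_fin_two_of]⟩

/-! `x ↦ matQ x` and `x ↦ matL x` are homomorphisms from `(ℚ, +)`, so the powers in the identity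
collapse to `Q^(-2p) = matQ (-(p+1))`, `Q^(-2) = matQ (-(p+1)/p)` and `A^p = matL p`; what is left
is a product of four explicit 2×2 matrices. Squaring removes the sign `-1`, which is what puts
`U_p^2` into the subgroup generated by `A` and `Q`. -/

open Matrix

lemma coe_matA : (matA : Matrix (Fin 2) (Fin 2) ℚ) = !![1, 0; 1, 1] := rfl

lemma coe_matQ (q : ℚ) : (matQ q : Matrix (Fin 2) (Fin 2) ℚ) = !![1, q; 0, 1] := rfl

lemma coe_matL (x : ℚ) : (matL x : Matrix (Fin 2) (Fin 2) ℚ) = !![1, 0; x, 1] := rfl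

lemma coe_matU {x : ℚ} (hx : x ≠ 0) :
    (matU x hx : Matrix (Fin 2) (Fin 2) ℚ) = !![x, 0; 0, x⁻¹] := rfl

lemma matQ_add (a b : ℚ) : matQ (a + b) = matQ a * matQ b := by
  ext : 1
  simp [coe_matQ, add_comm]

lemma matL_add (a b : ℚ) : matL (a + b) = matL a * matL b := by
  ext : 1
  simp [coe_matL]

lemma matQ_zero : matQ 0 = 1 := by
  ext : 1
  simp [coe_matQ, one_fin_two]

lemma matL_zero : matL 0 = 1 := by
  ext : 1
  simp [coe_matL, one_fin_two]

def matQHom : Multiplicative ℚ →* SL2Q where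
  toFun a := matQ a.toAdd
  map_one' := matQ_zero
  map_mul' a b := matQ_add a.toAdd b.toAdd

def matLHom : Multiplicative ℚ →* SL2Q where
  toFun a := matL a.toAdd
  map_one' := matL_zero
  map_mul' a b := matL_add a.toAdd b.toAdd

lemma matQ_zpow (a : ℚ) (n : ℤ) : matQ a ^ n = matQ (n * a) := by
  rw [← zsmul_eq_mul]
  exact (map_zpow matQHom (.ofAdd a) n).symm

lemma matA_pow (n : ℕ) : matA ^ n = matL n := by
  rw [← nsmul_one]
  exact (map_pow matLHom (.ofAdd 1) n).symm

lemma coe_matQ_mul_matA_mul_matQ_mul_matL {x : ℚ} (hx : x ≠ 0) :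
    ((matQ (-(x + 1)) * matA * matQ (-((x + 1) / x)) * matL x : SL2Q) : Matrix (Fin 2) (Fin 2) ℚ)
      = -(matU x hx : Matrix (Fin 2) (Fin 2) ℚ) := by
  change (matQ _ : Matrix (Fin 2) (Fin 2) ℚ) * matA * matQ _ * matL x = _
  simp only [coe_matQ, coe_matA, coe_matL, coe_matU, mul_fin_two]
  ext i j
  fin_cases i <;> fin_cases j <;> simp [hx] <;> field_simp <;> ring

lemma sq_eq_sq_of_coe_eq_neg {n R : Type*} [Fintype n] [DecidableEq n] [CommRing R]
    {g h : SpecialLinearGroup n R} (hgh : (g : Matrix n n R) = -h) : g ^ 2 = h ^ 2 := by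
  ext1
  simp [hgh]

theorem stmt15_general (p : ℕ) (hp : p.Prime) :
    -((matU p (Nat.cast_ne_zero.mpr hp.ne_zero) : Matrix (Fin 2) (Fin 2) ℚ)) =
      (((matQ (((p:ℚ)+1)/(2*p)))^(-(2*(p:ℤ))) * matA * (matQ (((p:ℚ)+1)/(2*p)))^(-2:ℤ) * matA^p :
        SL2Q) : Matrix (Fin 2) (Fin 2) ℚ) ∧
    (matU p (Nat.cast_ne_zero.mpr hp.ne_zero))^2 ∈
      Subgroup.closure {matA, matQ (((p:ℚ)+1)/(2*p))} := by
  have hp0 : (p : ℚ) ≠ 0 := Nat.cast_ne_zero.mpr hp.ne_zero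
  set q : ℚ := ((p:ℚ)+1)/(2*p)
  have hexp₁ : ((-(2 * (p:ℤ)) : ℤ) : ℚ) * q = -(p + 1) := by push_cast [q]; field_simp
  have hexp₂ : ((-2 : ℤ) : ℚ) * q = -((p + 1) / p) := by push_cast [q]; field_simp
  have key : -((matU p hp0 : Matrix (Fin 2) (Fin 2) ℚ)) =
      ((matQ q ^ (-(2*(p:ℤ))) * matA * matQ q ^ (-2:ℤ) * matA ^ p : SL2Q) : Matrix (Fin 2) (Fin 2) ℚ) := by
    rw [matQ_zpow, matQ_zpow, hexp₁, hexp₂, matA_pow, coe_matQ_mul_matA_mul_matQ_mul_matL hp0]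
  refine ⟨key, ?_⟩
  have hA : matA ∈ Subgroup.closure {matA, matQ q} := Subgroup.subset_closure (by simp)
  have hQ : matQ q ∈ Subgroup.closure {matA, matQ q} := Subgroup.subset_closure (by simp)
  rw [sq_eq_sq_of_coe_eq_neg (neg_eq_iff_eq_neg.mp key)]
  exact pow_mem (mul_mem (mul_mem (mul_mem (zpow_mem hQ _) hA) (zpow_mem hQ _)) (pow_mem hA _)) 2

theorem stmt15 (p : ℕ) (hp : p.Prime) (hodd : Odd p) :
    -((matU p (Nat.cast_ne_zero.mpr hp.ne_zero) : Matrix (Fin 2) (Fin 2) ℚ)) =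
      (((matQ (((p:ℚ)+1)/(2*p)))^(-(2*(p:ℤ))) * matA * (matQ (((p:ℚ)+1)/(2*p)))^(-2:ℤ) * matA^p :
        SL2Q) : Matrix (Fin 2) (Fin 2) ℚ) ∧
    (matU p (Nat.cast_ne_zero.mpr hp.ne_zero))^2 ∈
      Subgroup.closure {matA, matQ (((p:ℚ)+1)/(2*p))} :=
  stmt15_general p hp
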